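/- For every natural number a, the constant term of the Laurent polynomial ∏_{1 ≤ i ≠ j ≤ 3} (1 - x_i/x_j)^a in the three variables x_1, x_2, x_3 equals the multinomial coefficient (3a)!/(a!)^3. -/

import Mathlib

/-!
Good's proof. Write `Q(a, b, c) = ∏_{i ≠ j} (x_j - x_i)^{a_i}` with `(a_0, a_1, a_2) = (a, b, c)`;
the constant term of `∏_{i ≠ j} (1 - x_i/x_j)^{a_i}` is the coefficient `D(a, b, c)` of
`x_0^{b+c} x_1^{a+c} x_2^{a+b}` in `Q(a, b, c)`. The Lagrange interpolation identity
`Σ_k ∏_{j ≠ k} x_j / (x_j - x_k) = 1` gives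
`Q(a+1, b+1, c+1) = x_1 x_2 Q(a, b+1, c+1) + x_0 x_2 Q(a+1, b, c+1) + x_0 x_1 Q(a+1, b+1, c)`,
so `D` satisfies Pascal's recurrence for trinomial coefficients. If `a = 0`, the coefficient
of the top power `x_0^{b+c}` isolates the two-variable case, which is the binomial theorem;
the other boundary cases follow by permuting the variables.
-/

open MvPolynomial Finset Nat

theorem Nat.multinomial_univ_three_spec (a b c : ℕ) :
    a ! * b ! * c ! * multinomial univ ![a, b, c] = (a + b + c)! := by
  simpa [Fin.prod_univ_three, Fin.sum_univ_three] using multinomial_spec univ ![a, b, c]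

theorem Nat.multinomial_univ_three_zero_left (b c : ℕ) :
    multinomial univ ![0, b, c] = (b + c).choose b := by
  rw [multinomial_univ_three, choose_eq_factorial_div_factorial (le_add_right b c),
    add_tsub_cancel_left]
  simp

theorem Nat.multinomial_univ_three_swap₀₁ (a b c : ℕ) :
    multinomial univ ![a, b, c] = multinomial univ ![b, a, c] := by
  simp only [multinomial_univ_three]
  ring_nf

theorem Nat.multinomial_univ_three_swap₀₂ (a b c : ℕ) :
    multinomial univ ![a, b, c] = multinomial univ ![c, b, a] := by
  simp only [multinomial_univ_three]
  ring_nf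

theorem Nat.multinomial_univ_three_succ (a b c : ℕ) :
    multinomial univ ![a + 1, b + 1, c + 1] =
      multinomial univ ![a, b + 1, c + 1] + multinomial univ ![a + 1, b, c + 1] +
        multinomial univ ![a + 1, b + 1, c] := by
  have h := multinomial_univ_three_spec (a + 1) (b + 1) (c + 1)
  have h₁ := multinomial_univ_three_spec a (b + 1) (c + 1)
  have h₂ := multinomial_univ_three_spec (a + 1) b (c + 1)
  have h₃ := multinomial_univ_three_spec (a + 1) (b + 1) c
  refine Nat.eq_of_mul_eq_mul_left (by positivity : 0 < (a + 1)! * (b + 1)! * (c + 1)!) ?_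
  rw [show a + 1 + (b + 1) + (c + 1) = a + b + c + 2 + 1 by ring, factorial_succ] at h
  rw [show a + (b + 1) + (c + 1) = a + b + c + 2 by ring] at h₁
  rw [show a + 1 + b + (c + 1) = a + b + c + 2 by ring] at h₂
  rw [show a + 1 + (b + 1) + c = a + b + c + 2 by ring] at h₃
  simp only [factorial_succ] at h h₁ h₂ h₃ ⊢
  linear_combination h - (a + 1) * h₁ - (b + 1) * h₂ - (c + 1) * h₃

theorem MvPolynomial.coeff_X_mul_X_mul_of_eq {σ R : Type*} [CommSemiring R] {m n : σ →₀ ℕ}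
    {i j : σ} (h : m = Finsupp.single i 1 + Finsupp.single j 1 + n) (p : MvPolynomial σ R) :
    coeff m (X i * X j * p) = coeff n p := by
  rw [h, mul_assoc, add_assoc, coeff_X_mul, coeff_X_mul]

theorem Polynomial.coeff_X_sub_C_pow_mul_X_sub_C_pow {R : Type*} [CommRing R] (u v : R)
    (b c : ℕ) :
    ((Polynomial.X - Polynomial.C u) ^ b * (Polynomial.X - Polynomial.C v) ^ c).coeff (b + c)
      = 1 := by
  rw [Polynomial.coeff_mul_add_eq_of_natDegree_le]
  · simp [sub_eq_add_neg, ← map_neg, Polynomial.coeff_X_add_C_pow]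
  all_goals exact (Polynomial.natDegree_pow_le_of_le _
    (Polynomial.natDegree_X_sub_C_le _)).trans_eq (mul_one _)

section

variable (R : Type*) [CommRing R]

theorem MvPolynomial.coeff_X_sub_X_pow_mul_X_sub_X_pow (b c : ℕ) :
    coeff (Finsupp.cons c (Finsupp.single 0 b))
      ((X 1 - X 0 : MvPolynomial (Fin 2) R) ^ b * (X 0 - X 1) ^ c) = ((b + c).choose b : R) := by
  have hsign : (X 1 - X 0 : MvPolynomial (Fin 2) R) ^ b * (X 0 - X 1) ^ c =
      (-1 : R) ^ b • (X 0 - X 1) ^ (b + c) := by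
    rw [← neg_sub (X 0), neg_pow, pow_add, smul_eq_C_mul, map_pow, map_neg, map_one, mul_assoc]
  have himage : finSuccEquiv R 1 ((X 0 - X 1 : MvPolynomial (Fin 2) R) ^ (b + c)) =
      (Polynomial.X + Polynomial.C (-X 0)) ^ (b + c) := by
    rw [map_pow, map_sub, finSuccEquiv_X_zero, show (1 : Fin 2) = Fin.succ 0 from rfl,
      finSuccEquiv_X_succ, sub_eq_add_neg, ← map_neg]
  have hterm : (-X 0) ^ b * ((b + c).choose c : MvPolynomial (Fin 1) R) =
      C ((-1) ^ b * ((b + c).choose b : R)) * X 0 ^ b := by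
    rw [neg_pow, choose_symm_add]
    simp only [map_mul, map_pow, map_neg, map_one, map_natCast]
    ring
  rw [hsign, coeff_smul, ← finSuccEquiv_coeff_coeff, himage, Polynomial.coeff_X_add_C_pow,
    add_tsub_cancel_right, hterm, coeff_C_mul, coeff_X_pow, if_pos rfl, mul_one, smul_eq_mul,
    ← mul_assoc, ← mul_pow, neg_one_mul, neg_neg, one_pow, one_mul]

noncomputable def dysonPoly (a b c : ℕ) : MvPolynomial (Fin 3) R :=
  (X 1 - X 0) ^ a * (X 2 - X 0) ^ a * (X 0 - X 1) ^ b * (X 2 - X 1) ^ b *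
    (X 0 - X 2) ^ c * (X 1 - X 2) ^ c

noncomputable def dysonExponent (a b c : ℕ) : Fin 3 →₀ ℕ :=
  Finsupp.equivFunOnFinite.symm ![b + c, a + c, a + b]

noncomputable def dysonCoeff (a b c : ℕ) : R :=
  coeff (dysonExponent a b c) (dysonPoly R a b c)

theorem dysonCoeff_swap₀₁ (a b c : ℕ) : dysonCoeff R a b c = dysonCoeff R b a c := by
  rw [dysonCoeff, dysonCoeff, ← coeff_rename_mapDomain _ (Equiv.swap (0 : Fin 3) 1).injective]
  congr 1
  · rw [← Finsupp.equivMapDomain_eq_mapDomain]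
    ext i; fin_cases i <;> simp [dysonExponent, Equiv.swap_apply_def, add_comm]
  · simp [dysonPoly, Equiv.swap_apply_def]; ring

theorem dysonCoeff_swap₀₂ (a b c : ℕ) : dysonCoeff R a b c = dysonCoeff R c b a := by
  rw [dysonCoeff, dysonCoeff, ← coeff_rename_mapDomain _ (Equiv.swap (0 : Fin 3) 2).injective]
  congr 1
  · rw [← Finsupp.equivMapDomain_eq_mapDomain]
    ext i; fin_cases i <;> simp [dysonExponent, Equiv.swap_apply_def, add_comm]
  · simp [dysonPoly, Equiv.swap_apply_def]; ring

theorem dysonCoeff_zero_left (b c : ℕ) : dysonCoeff R 0 b c = (b + c).choose b := by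
  have hexp : dysonExponent 0 b c =
      Finsupp.cons (b + c) (Finsupp.cons c (Finsupp.single 0 b)) := by
    ext i; revert i; simp [Fin.forall_fin_succ, dysonExponent]
  have himage : finSuccEquiv R 2 (dysonPoly R 0 b c) =
      (Polynomial.X - Polynomial.C (X 0)) ^ b * (Polynomial.X - Polynomial.C (X 1)) ^ c *
        Polynomial.C ((X 1 - X 0) ^ b * (X 0 - X 1) ^ c) := by
    simp only [dysonPoly, pow_zero, one_mul, map_mul, map_pow, map_sub, finSuccEquiv_X_zero,
      show (1 : Fin 3) = Fin.succ 0 from rfl, show (2 : Fin 3) = Fin.succ 1 from rfl,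
      finSuccEquiv_X_succ]
    ring
  rw [dysonCoeff, hexp, ← finSuccEquiv_coeff_coeff, himage, Polynomial.coeff_mul_C,
    Polynomial.coeff_X_sub_C_pow_mul_X_sub_C_pow, one_mul, coeff_X_sub_X_pow_mul_X_sub_X_pow]

theorem dysonPoly_succ (a b c : ℕ) :
    dysonPoly R (a + 1) (b + 1) (c + 1) =
      X 1 * X 2 * dysonPoly R a (b + 1) (c + 1) + X 0 * X 2 * dysonPoly R (a + 1) b (c + 1) +
        X 0 * X 1 * dysonPoly R (a + 1) (b + 1) c := by
  simp only [dysonPoly, pow_succ]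
  ring

theorem dysonCoeff_succ (a b c : ℕ) :
    dysonCoeff R (a + 1) (b + 1) (c + 1) =
      dysonCoeff R a (b + 1) (c + 1) + dysonCoeff R (a + 1) b (c + 1) +
        dysonCoeff R (a + 1) (b + 1) c := by
  have e₁ : dysonExponent (a + 1) (b + 1) (c + 1) =
      Finsupp.single 1 1 + Finsupp.single 2 1 + dysonExponent a (b + 1) (c + 1) := by
    ext i; fin_cases i <;> simp [dysonExponent] <;> omega
  have e₂ : dysonExponent (a + 1) (b + 1) (c + 1) =
      Finsupp.single 0 1 + Finsupp.single 2 1 + dysonExponent (a + 1) b (c + 1) := by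
    ext i; fin_cases i <;> simp [dysonExponent] <;> omega
  have e₃ : dysonExponent (a + 1) (b + 1) (c + 1) =
      Finsupp.single 0 1 + Finsupp.single 1 1 + dysonExponent (a + 1) (b + 1) c := by
    ext i; fin_cases i <;> simp [dysonExponent] <;> omega
  rw [dysonCoeff, dysonPoly_succ, coeff_add, coeff_add, coeff_X_mul_X_mul_of_eq e₁,
    coeff_X_mul_X_mul_of_eq e₂, coeff_X_mul_X_mul_of_eq e₃]
  rfl

theorem dysonCoeff_eq_multinomial : ∀ a b c : ℕ,
    dysonCoeff R a b c = multinomial univ ![a, b, c]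
  | 0, b, c => by rw [dysonCoeff_zero_left, multinomial_univ_three_zero_left]
  | a + 1, 0, c => by
    rw [dysonCoeff_swap₀₁, dysonCoeff_zero_left, multinomial_univ_three_swap₀₁,
      multinomial_univ_three_zero_left]
  | a + 1, b + 1, 0 => by
    rw [dysonCoeff_swap₀₂, dysonCoeff_zero_left, multinomial_univ_three_swap₀₂,
      multinomial_univ_three_zero_left]
  | a + 1, b + 1, c + 1 => by
    rw [dysonCoeff_succ, multinomial_univ_three_succ, dysonCoeff_eq_multinomial a,
      dysonCoeff_eq_multinomial (a + 1) b, dysonCoeff_eq_multinomial (a + 1) (b + 1) c]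
    push_cast
    rfl
termination_by a b c => a + b + c

end

/-- Dyson's constant term identity for `n = 3`: the constant term of
`∏_{1 ≤ i ≠ j ≤ 3} (1 - x_i/x_j)^a` equals `(3a)!/(a!)^3`.  Since
`∏_{i ≠ j} (1 - x_i/x_j)^a = (x_1 x_2 x_3)^{-2a} ∏_{i ≠ j} (x_j - x_i)^a`,
this says the coefficient of `x_1^{2a} x_2^{2a} x_3^{2a}` in the polynomial
`∏_{i ≠ j} (x_j - x_i)^a` equals `(3a)!/(a!)^3`. -/
theorem stmt1 (a : ℕ) :
    MvPolynomial.coeff (Finsupp.equivFunOnFinite.symm fun _ : Fin 3 => 2 * a)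
      (∏ p ∈ Finset.univ.filter (fun p : Fin 3 × Fin 3 => p.1 ≠ p.2),
        ((X p.2 - X p.1) ^ a : MvPolynomial (Fin 3) ℚ))
      = ((3 * a).factorial : ℚ) / ((a.factorial : ℚ)) ^ 3 := by
  have hexp : (Finsupp.equivFunOnFinite.symm fun _ : Fin 3 => 2 * a) = dysonExponent a a a := by
    ext i; fin_cases i <;> simp [dysonExponent] <;> ring
  have hpoly : ∏ p ∈ Finset.univ.filter (fun p : Fin 3 × Fin 3 => p.1 ≠ p.2),
      ((X p.2 - X p.1) ^ a : MvPolynomial (Fin 3) ℚ) = dysonPoly ℚ a a a := by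
    simp [Finset.prod_filter, Fintype.prod_prod_type, Fin.prod_univ_three, dysonPoly]
    ring
  have hspec := multinomial_univ_three_spec a a a
  rw [hexp, hpoly, ← dysonCoeff, dysonCoeff_eq_multinomial, eq_div_iff (by positivity),
    show 3 * a = a + a + a by ring, ← hspec]
  push_cast
  ring
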